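/- Let G = F₂ ≀ S₃ with F₂ the free group on x, y and S₃ = ⟨s₁, s₂ | s₁² = s₂² = (s₁s₂)³ = 1⟩, and let S = {x, y, s₁, s₂, c} with c = s₁s₂ be the generating set of G where x, y generate the copy of F₂ at the coordinate indexed by the identity of S₃. Then every element of the base subgroup F₂⁶ = ∏_{σ∈S₃} F₂ of G can be written as a product of at most 18 palindromes with respect to S. -/

import Mathlib

/-!
In `F₂ = F(x, y)` let `P` be the smallest set containing `1` and the letters and closed under
`t ↦ a t a` and `t ↦ a t a⁻¹` for letters `a`. Being closed under conjugation, `P` contains a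
word as soon as it contains a cyclic rotation of it. A cyclic word of odd length over two
generators has two cyclically adjacent letters on the same generator; rotating them to the two
ends exhibits the word as `a t a` or `a t a⁻¹` with `t` shorter and odd. So every odd word lies
in `P`, and every element of `F₂` is a product of two elements of `P`.

In `F₂ ≀ S₃` the copy of `a t a` at the coordinate `1` is a literal palindrome, and `a t a⁻¹` is
the palindrome `U t Uʳ` with `U = s₁ s₂ c a⁻¹ c a c s₂ s₁`: the extra copies of `a` land on the
coordinate `c²` and cancel there. Sandwiching between a word in the involutions `s₁, s₂` and its
reverse moves the coordinate `1` to any `σ ∈ S₃`. Each of the six coordinates of the base group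
thus costs two palindromes, `12 ≤ 18` in all.
-/

section PalindromicWidth

/-- `g` is a palindrome with respect to the (symmetric) generating set `X`:
some word over `X` representing `g` equals its own reverse. -/
def IsPalindrome {G : Type*} [Group G] (X : Set G) (g : G) : Prop :=
  ∃ w : List G, (∀ a ∈ w, a ∈ X) ∧ w.reverse = w ∧ w.prod = g

/-- The palindromic length of `g` with respect to `X`, valued in `ℕ∞`:
the least `k` such that `g` is a product of `k` palindromes. -/
noncomputable def palLength {G : Type*} [Group G] (X : Set G) (g : G) : ℕ∞ :=
  sInf {k : ℕ∞ | ∃ L : List G, (L.length : ℕ∞) = k ∧ (∀ p ∈ L, IsPalindrome X p) ∧ L.prod = g}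

/-- The palindromic width `pw(G, X) = sup_{g ∈ G} l_P(g)`, valued in `ℕ∞`. -/
noncomputable def palWidth (G : Type*) [Group G] (X : Set G) : ℕ∞ :=
  ⨆ g : G, palLength X g

end PalindromicWidth

/-- The permutation action of `K` on the base group `K → H` of the wreath product
`H ≀ K`, by left translation on the index set: `(k • f) k' = f (k⁻¹ * k')`. -/
def wreathAction (H K : Type*) [Group H] [Group K] : K →* MulAut (K → H) where
  toFun k :=
    { toFun := fun f x => f (k⁻¹ * x)
      invFun := fun f x => f (k * x)
      left_inv := fun f => by funext x; simp [← mul_assoc]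
      right_inv := fun f => by funext x; simp [← mul_assoc]
      map_mul' := fun f g => rfl }
  map_one' := by
    ext f x
    simp
  map_mul' := fun a b => by
    ext f x
    simp [mul_assoc]

/-- The wreath product `H ≀ K = (∏_{k ∈ K} H) ⋊ K`. -/
abbrev WreathProduct (H K : Type*) [Group H] [Group K] :=
  SemidirectProduct (K → H) K (wreathAction H K)

/-- The symmetric group `S₃`, realized as the permutations of `Fin 3`. -/
abbrev S3 := Equiv.Perm (Fin 3)

/-- The wreath product `G = F₂ ≀ S₃`. -/
abbrev F2wrS3 := WreathProduct (FreeGroup (Fin 2)) S3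

/-- The generator `x` of the copy of `F₂` at the coordinate indexed by `1 ∈ S₃`. -/
def genX : F2wrS3 := SemidirectProduct.inl (Pi.mulSingle (1 : S3) (FreeGroup.of 0))

/-- The generator `y` of the copy of `F₂` at the coordinate indexed by `1 ∈ S₃`. -/
def genY : F2wrS3 := SemidirectProduct.inl (Pi.mulSingle (1 : S3) (FreeGroup.of 1))

/-- The generator `s₁` (a standard involution of `S₃`). -/
def genS1 : F2wrS3 := SemidirectProduct.inr (Equiv.swap 0 1)

/-- The generator `s₂` (a standard involution of `S₃`). -/
def genS2 : F2wrS3 := SemidirectProduct.inr (Equiv.swap 1 2)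

/-- The generator `c = s₁ s₂`. -/
def genC : F2wrS3 := SemidirectProduct.inr (Equiv.swap 0 1 * Equiv.swap 1 2)

/-- The generating set `S = {x, y, s₁, s₂, c}` of `F₂ ≀ S₃`, together with inverses. -/
def genSet : Set F2wrS3 :=
  {genX, genY, genS1, genS2, genC} ∪ {genX, genY, genS1, genS2, genC}⁻¹

section Palindrome

variable {G : Type*} [Group G] {X : Set G}

theorem IsPalindrome.one : IsPalindrome X 1 := ⟨[], by simp, rfl, rfl⟩

theorem IsPalindrome.of_mem {x : G} (hx : x ∈ X) : IsPalindrome X x :=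
  ⟨[x], by simpa using hx, rfl, by simp⟩

theorem IsPalindrome.list_prod_mul_mul_prod_reverse {w : List G} (hw : ∀ a ∈ w, a ∈ X)
    {p : G} (hp : IsPalindrome X p) : IsPalindrome X (w.prod * p * w.reverse.prod) := by
  obtain ⟨v, hvX, hv, rfl⟩ := hp
  refine ⟨w ++ v ++ w.reverse, ?_, by simp [hv, List.append_assoc], by simp [mul_assoc]⟩
  simp only [List.mem_append, List.mem_reverse]
  rintro a ((ha | ha) | ha) <;> simp_all

theorem IsPalindrome.mul_mul_self {x p : G} (hx : x ∈ X) (hp : IsPalindrome X p) :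
    IsPalindrome X (x * p * x) := by
  simpa using hp.list_prod_mul_mul_prod_reverse (w := [x]) (by simpa using hx)

theorem IsPalindrome.conj_of_forall_inv_eq_self {w : List G} (hw : ∀ a ∈ w, a ∈ X ∧ a⁻¹ = a)
    {p : G} (hp : IsPalindrome X p) : IsPalindrome X (w.prod * p * w.prod⁻¹) := by
  have hrev : w.reverse.prod = w.prod⁻¹ := by
    rw [List.prod_reverse_noncomm, List.map_congr_left (fun a ha => (hw a ha).2), List.map_id']
  simpa [hrev] using hp.list_prod_mul_mul_prod_reverse fun a ha => (hw a ha).1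

/-- The palindrome `A (a⁻¹ τ⁻¹ a) Aʳ · p · A (a τ⁻¹ a⁻¹) Aʳ`, where `τ = A.prod`, evaluates to
`b⁻¹ a · p · b a⁻¹` with `b = τ a τ⁻¹`, and `b` cancels once commuted across `a p`. -/
theorem IsPalindrome.conj_of_commute {A : List G} (hA : ∀ x ∈ A, x ∈ X)
    (hA_rev : A.reverse.prod = 1) (hA_inv : A.prod⁻¹ ∈ X) {a p : G} (ha : a ∈ X)
    (ha_inv : a⁻¹ ∈ X) (hp : IsPalindrome X p)
    (hb_a : Commute (A.prod * a * A.prod⁻¹) a) (hb_p : Commute (A.prod * a * A.prod⁻¹) p) :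
    IsPalindrome X (a * p * a⁻¹) := by
  set b := A.prod * a * A.prod⁻¹
  let U := A ++ [a⁻¹, A.prod⁻¹, a] ++ A.reverse
  have hU : ∀ x ∈ U, x ∈ X := by
    simp only [U, List.mem_append, List.mem_cons, List.mem_reverse, List.not_mem_nil, or_false]
    rintro x ((hx | rfl | rfl | rfl) | hx) <;> simp_all
  have hU_prod : U.prod = b⁻¹ * a := by simp [U, b, hA_rev, mul_assoc]
  have hU_rev : U.reverse.prod = b * a⁻¹ := by simp [U, b, hA_rev, mul_assoc]
  have key : U.prod * p * U.reverse.prod = a * p * a⁻¹ := by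
    have hb : a * p * b = b * (a * p) := ((hb_a.mul_right hb_p).symm).eq
    calc U.prod * p * U.reverse.prod = b⁻¹ * (a * p * b) * a⁻¹ := by
          rw [hU_prod, hU_rev]; simp only [mul_assoc]
      _ = a * p * a⁻¹ := by rw [hb, inv_mul_cancel_left]
  exact key ▸ hp.list_prod_mul_mul_prod_reverse hU

end Palindrome

section ProdOfPalindromes

variable {G : Type*} [Group G] {X : Set G}

def IsProdOfPalindromes (X : Set G) (n : ℕ) (g : G) : Prop :=
  ∃ L : List G, L.length ≤ n ∧ (∀ p ∈ L, IsPalindrome X p) ∧ L.prod = g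

theorem IsProdOfPalindromes.mono {m n : ℕ} {g : G} (h : IsProdOfPalindromes X m g)
    (hmn : m ≤ n) : IsProdOfPalindromes X n g :=
  let ⟨L, hL, hpal, hprod⟩ := h
  ⟨L, hL.trans hmn, hpal, hprod⟩

theorem IsPalindrome.isProdOfPalindromes_mul {p q : G} (hp : IsPalindrome X p)
    (hq : IsPalindrome X q) : IsProdOfPalindromes X 2 (p * q) :=
  ⟨[p, q], le_rfl, by simp [hp, hq], by simp⟩

theorem IsProdOfPalindromes.mul {m n : ℕ} {g h : G} (hg : IsProdOfPalindromes X m g)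
    (hh : IsProdOfPalindromes X n h) : IsProdOfPalindromes X (m + n) (g * h) :=
  let ⟨L, hL, hLpal, hLprod⟩ := hg
  let ⟨M, hM, hMpal, hMprod⟩ := hh
  ⟨L ++ M, by simpa using add_le_add hL hM,
    fun p hp => (List.mem_append.mp hp).elim (hLpal p) (hMpal p), by simp [hLprod, hMprod]⟩

theorem IsProdOfPalindromes.list_prod {n : ℕ} :
    ∀ {l : List G}, (∀ g ∈ l, IsProdOfPalindromes X n g) →
      IsProdOfPalindromes X (l.length * n) l.prod
  | [], _ => ⟨[], by simp, by simp, rfl⟩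
  | g :: l, h => by
    simpa [add_mul, add_comm] using
      (h g (by simp)).mul (list_prod fun g' hg' => h g' (by simp [hg']))

end ProdOfPalindromes

theorem List.exists_adjacent_or_getLast_eq {α : Type*} (c : α → Fin 2) :
    ∀ (a : α) (L : List α), Even L.length →
      (∃ A x y B, a :: L = A ++ x :: y :: B ∧ c x = c y) ∨
        c ((a :: L).getLast (cons_ne_nil a L)) = c a
  | a, [], _ => Or.inr rfl
  | _, [_], h => absurd h (by simp)
  | a, b :: d :: L, h => by
    have hL : Even L.length := by simpa [Nat.even_add_one] using h
    rcases exists_adjacent_or_getLast_eq c d L hL with ⟨A, x, y, B, hdL, hxy⟩ | hlast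
    · exact Or.inl ⟨a :: b :: A, x, y, B, by simp [hdL], hxy⟩
    · by_cases hab : c a = c b
      · exact Or.inl ⟨[], a, b, d :: L, rfl, hab⟩
      by_cases hbd : c b = c d
      · exact Or.inl ⟨[a], b, d, L, rfl, hbd⟩
      refine Or.inr ?_
      rw [getLast_cons_cons, getLast_cons_cons, hlast]
      omega

namespace FreeGroup

section OddLength

variable {Q : FreeGroup (Fin 2) → Prop}

theorem mk_mul_mul_inv_of_conj_closed
    (hconj : ∀ l t, Q t → Q (mk [l] * t * (mk [l])⁻¹)) {t : FreeGroup (Fin 2)} (ht : Q t) :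
    ∀ M, Q (mk M * t * (mk M)⁻¹)
  | [] => by simpa [← one_eq_mk] using ht
  | l :: M => by
    have h := hconj l _ (mk_mul_mul_inv_of_conj_closed hconj ht M)
    rw [show l :: M = [l] ++ M from rfl, ← mul_mk, mul_inv_rev]
    simpa only [mul_assoc] using h

theorem mk_cons_append_singleton_of_fst_eq
    (hwrap : ∀ l t, Q t → Q (mk [l] * t * mk [l]))
    (hconj : ∀ l t, Q t → Q (mk [l] * t * (mk [l])⁻¹))
    {x y : Fin 2 × Bool} (hxy : x.1 = y.1) {V : List (Fin 2 × Bool)} (hV : Q (mk V)) :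
    Q (mk (y :: V ++ [x])) := by
  have hsplit : mk (y :: V ++ [x]) = mk [y] * mk V * mk [x] := by simp only [mul_mk]; rfl
  obtain ⟨j, c⟩ := x
  obtain ⟨i, b⟩ := y
  obtain rfl : j = i := hxy
  rw [hsplit]
  by_cases hcb : c = b
  · exact hcb ▸ hwrap _ _ hV
  · obtain rfl : c = !b := by cases b <;> simpa using hcb
    rw [show mk [(j, !b)] = (mk [(j, b)])⁻¹ by rw [inv_mk]; rfl]
    exact hconj _ _ hV

theorem mk_of_odd_length (hof : ∀ l, Q (mk [l]))
    (hwrap : ∀ l t, Q t → Q (mk [l] * t * mk [l]))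
    (hconj : ∀ l t, Q t → Q (mk [l] * t * (mk [l])⁻¹)) :
    ∀ L : List (Fin 2 × Bool), Odd L.length → Q (mk L)
  | [], h => absurd h (by simp)
  | [l], _ => hof l
  | a :: b :: R, h => by
    have ih : ∀ V : List (Fin 2 × Bool), V.length < R.length + 2 → Odd V.length → Q (mk V) :=
      fun V _ hV => mk_of_odd_length hof hwrap hconj V hV
    obtain ⟨k, hk⟩ := h
    simp only [List.length_cons] at hk
    have hR : Even (b :: R).length := ⟨k, by simp only [List.length_cons]; omega⟩
    rcases List.exists_adjacent_or_getLast_eq Prod.fst a (b :: R) hR with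
      ⟨A, x, y, B, hL, hxy⟩ | hends
    · -- rotate the adjacent pair `x y` to the two ends of the word
      have hlen := congrArg List.length hL
      simp only [List.length_cons, List.length_append] at hlen
      have hrot : mk (a :: b :: R) =
          mk (A ++ [x]) * mk (y :: (B ++ A) ++ [x]) * (mk (A ++ [x]))⁻¹ := by
        rw [hL, eq_mul_inv_iff_mul_eq, mul_mk, mul_mk]; simp
      rw [hrot]
      refine mk_mul_mul_inv_of_conj_closed hconj
        (mk_cons_append_singleton_of_fst_eq hwrap hconj hxy
          (ih (B ++ A) (by simp only [List.length_append]; omega) ?_)) _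
      exact ⟨k - 1, by simp only [List.length_append]; omega⟩
    · obtain ⟨V, x, hV⟩ := (b :: R).eq_nil_or_concat'.resolve_left (List.cons_ne_nil b R)
      have hxa : x.1 = a.1 := by simpa [hV] using hends
      have hlen := congrArg List.length hV
      simp only [List.length_cons, List.length_append, List.length_nil] at hlen
      rw [hV, ← List.cons_append]
      exact mk_cons_append_singleton_of_fst_eq hwrap hconj hxa
        (ih V (by omega) ⟨k - 1, by omega⟩)
  termination_by L => L.length

end OddLength

theorem exists_mul_eq_of_wrap_closed {Q : FreeGroup (Fin 2) → Prop} (hone : Q 1)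
    (hof : ∀ l, Q (mk [l])) (hwrap : ∀ l t, Q t → Q (mk [l] * t * mk [l]))
    (hconj : ∀ l t, Q t → Q (mk [l] * t * (mk [l])⁻¹)) (g : FreeGroup (Fin 2)) :
    ∃ p q, Q p ∧ Q q ∧ p * q = g := by
  obtain ⟨L, rfl⟩ : ∃ L, mk L = g := ⟨g.toWord, mk_toWord⟩
  rcases Nat.even_or_odd L.length with hL | hL
  · cases L with
    | nil => exact ⟨1, 1, hone, hone, by rw [mul_one, one_eq_mk]⟩
    | cons l L =>
      refine ⟨mk [l], mk L, hof l, mk_of_odd_length hof hwrap hconj L ?_, by rw [mul_mk]; rfl⟩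
      simpa [Nat.even_add_one] using hL
  · exact ⟨mk L, 1, mk_of_odd_length hof hwrap hconj L hL, hone, mul_one _⟩

end FreeGroup

theorem Finset.prod_map_mulSingle_univ_toList {ι : Type*} {M : ι → Type*} [∀ i, Monoid (M i)]
    [Fintype ι] [DecidableEq ι] (f : ∀ i, M i) :
    (Finset.univ.toList.map fun i => Pi.mulSingle i (f i)).prod = f := by
  have hcoe : ((Finset.univ.toList.map fun i => Pi.mulSingle i (f i) : List (∀ i, M i)) :
      Multiset (∀ i, M i)) = Finset.univ.val.map fun i => Pi.mulSingle i (f i) := by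
    rw [← Multiset.map_coe, Finset.coe_toList]
  conv_rhs => rw [← Finset.noncommProd_mulSingle f]
  unfold Finset.noncommProd
  rw [← Multiset.noncommProd_coe _ (hcoe ▸ Finset.noncommProd_lemma _ _
    fun i _ j _ _ => Pi.mulSingle_apply_commute f i j)]
  congr 1

section Wreath

open SemidirectProduct

variable {H K : Type*} [Group H] [Group K] [DecidableEq K]

theorem wreathAction_mulSingle (σ τ : K) (h : H) :
    wreathAction H K σ (Pi.mulSingle τ h) = Pi.mulSingle (σ * τ) h := by
  funext x
  simp only [wreathAction, MonoidHom.coe_mk, OneHom.coe_mk, MulEquiv.coe_mk, Equiv.coe_fn_mk,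
    Pi.mulSingle_apply, inv_mul_eq_iff_eq_mul]

theorem WreathProduct.inr_mul_inl_mulSingle_mul_inr_inv (σ τ : K) (h : H) :
    (inr σ * inl (Pi.mulSingle τ h) * inr σ⁻¹ : WreathProduct H K) =
      inl (Pi.mulSingle (σ * τ) h) := by
  rw [← inl_aut, wreathAction_mulSingle]

theorem WreathProduct.commute_inl_mulSingle {σ τ : K} (hστ : σ ≠ τ) (a b : H) :
    Commute (inl (Pi.mulSingle σ a) : WreathProduct H K) (inl (Pi.mulSingle τ b)) :=
  (Pi.mulSingle_commute (f := fun _ : K => H) hστ a b).map inl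

end Wreath

namespace F2wrS3

open SemidirectProduct

theorem genS1_mem : genS1 ∈ genSet := Or.inl (by simp)

theorem genS2_mem : genS2 ∈ genSet := Or.inl (by simp)

theorem genC_mem : genC ∈ genSet := Or.inl (by simp)

theorem inl_mulSingle_one_mk_singleton_mem (l : Fin 2 × Bool) :
    (inl (Pi.mulSingle 1 (FreeGroup.mk [l])) : F2wrS3) ∈ genSet := by
  obtain ⟨i, b⟩ := l
  have hgen : (inl (Pi.mulSingle 1 (FreeGroup.of i)) : F2wrS3) ∈ ({genX, genY} : Set F2wrS3) := by
    fin_cases i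
    exacts [Or.inl rfl, Or.inr rfl]
  have hsub : ({genX, genY} : Set F2wrS3) ⊆ {genX, genY, genS1, genS2, genC} := by
    intro x hx; simp only [Set.mem_insert_iff, Set.mem_singleton_iff] at hx ⊢; tauto
  cases b
  · have hinv : FreeGroup.mk [(i, false)] = (FreeGroup.of i)⁻¹ := by
      rw [FreeGroup.of, FreeGroup.inv_mk]; rfl
    rw [hinv, Pi.mulSingle_inv, _root_.map_inv]
    exact Or.inr (Set.inv_mem_inv.mpr (hsub hgen))
  · exact Or.inl (hsub hgen)

theorem isPalindrome_inl_mulSingle_one_mul_mul_self (l : Fin 2 × Bool) {t : FreeGroup (Fin 2)}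
    (ht : IsPalindrome genSet (inl (Pi.mulSingle 1 t))) :
    IsPalindrome genSet (inl (Pi.mulSingle 1 (FreeGroup.mk [l] * t * FreeGroup.mk [l]))) := by
  simpa only [Pi.mulSingle_mul, _root_.map_mul] using
    ht.mul_mul_self (inl_mulSingle_one_mk_singleton_mem l)

/-- The word `s₁ s₂ c` has product `c²`, which moves the coordinate `1` to `c²`, while its
reverse `c s₂ s₁` has product `1`. -/
theorem isPalindrome_inl_mulSingle_one_mul_mul_inv (l : Fin 2 × Bool) {t : FreeGroup (Fin 2)}
    (ht : IsPalindrome genSet (inl (Pi.mulSingle 1 t))) :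
    IsPalindrome genSet (inl (Pi.mulSingle 1 (FreeGroup.mk [l] * t * (FreeGroup.mk [l])⁻¹))) := by
  set τ : S3 := (Equiv.swap 0 1 * Equiv.swap 1 2) ^ 2
  have hA_prod : [genS1, genS2, genC].prod = inr τ := by
    simp only [List.prod_cons, List.prod_nil, mul_one, genS1, genS2, genC, ← _root_.map_mul]
    rfl
  have hA_rev : [genS1, genS2, genC].reverse.prod = 1 := by
    simp only [List.reverse_cons, List.reverse_nil, List.nil_append, List.cons_append,
      List.prod_cons, List.prod_nil, mul_one, genS1, genS2, genC, ← _root_.map_mul]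
    exact (map_eq_one_iff _ inr_injective).mpr (by decide)
  have hA_inv : [genS1, genS2, genC].prod⁻¹ = genC := by
    rw [hA_prod, ← _root_.map_inv]
    exact congrArg inr (by decide)
  have hb : (inr τ * inl (Pi.mulSingle (1 : S3) (FreeGroup.mk [l])) * (inr τ)⁻¹ : F2wrS3) =
      inl (Pi.mulSingle τ (FreeGroup.mk [l])) := by
    rw [← _root_.map_inv, WreathProduct.inr_mul_inl_mulSingle_mul_inr_inv, mul_one]
  have hτ : τ ≠ 1 := by decide
  have ha_inv : (inl (Pi.mulSingle (1 : S3) (FreeGroup.mk [l])) : F2wrS3)⁻¹ ∈ genSet := by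
    rw [← _root_.map_inv, ← Pi.mulSingle_inv, FreeGroup.inv_mk]
    exact inl_mulSingle_one_mk_singleton_mem _
  have key := ht.conj_of_commute (A := [genS1, genS2, genC])
    (by simp [genS1_mem, genS2_mem, genC_mem]) hA_rev (by rw [hA_inv]; exact genC_mem)
    (inl_mulSingle_one_mk_singleton_mem l) ha_inv
    (by rw [hA_prod, hb]; exact WreathProduct.commute_inl_mulSingle hτ _ _)
    (by rw [hA_prod, hb]; exact WreathProduct.commute_inl_mulSingle hτ _ _)
  simpa only [Pi.mulSingle_mul, Pi.mulSingle_inv, _root_.map_mul, _root_.map_inv] using key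

theorem exists_involutive_word (σ : S3) :
    ∃ W : List F2wrS3, (∀ x ∈ W, x ∈ genSet ∧ x⁻¹ = x) ∧ W.prod = inr σ := by
  have hσ : σ ∈ Submonoid.closure (Set.range fun i : Fin 2 => Equiv.swap i.castSucc i.succ) := by
    rw [Equiv.Perm.mclosure_swap_castSucc_succ]; trivial
  obtain ⟨l, hl, hprod⟩ := Submonoid.exists_list_of_mem_closure hσ
  refine ⟨l.map inr, ?_, by rw [← map_list_prod, hprod]⟩
  simp only [List.mem_map]
  rintro _ ⟨_, hx, rfl⟩
  obtain ⟨i, rfl⟩ := hl _ hx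
  refine ⟨?_, by rw [← _root_.map_inv, Equiv.swap_inv]⟩
  fin_cases i
  exacts [genS1_mem, genS2_mem]

theorem isPalindrome_inl_mulSingle_of_one (σ : S3) {h : FreeGroup (Fin 2)}
    (hh : IsPalindrome genSet (inl (Pi.mulSingle 1 h))) :
    IsPalindrome genSet (inl (Pi.mulSingle σ h)) := by
  obtain ⟨W, hW, hprod⟩ := exists_involutive_word σ
  have := hh.conj_of_forall_inv_eq_self hW
  rwa [hprod, ← _root_.map_inv, WreathProduct.inr_mul_inl_mulSingle_mul_inr_inv, mul_one] at this

theorem isProdOfPalindromes_inl_mulSingle (σ : S3) (h : FreeGroup (Fin 2)) :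
    IsProdOfPalindromes genSet 2 (inl (Pi.mulSingle σ h)) := by
  obtain ⟨p, q, hp, hq, rfl⟩ := FreeGroup.exists_mul_eq_of_wrap_closed
    (Q := fun t => IsPalindrome genSet (inl (Pi.mulSingle (1 : S3) t)))
    (by simpa using IsPalindrome.one) (fun l => .of_mem (inl_mulSingle_one_mk_singleton_mem l))
    isPalindrome_inl_mulSingle_one_mul_mul_self isPalindrome_inl_mulSingle_one_mul_mul_inv h
  rw [Pi.mulSingle_mul, _root_.map_mul]
  exact (isPalindrome_inl_mulSingle_of_one σ hp).isProdOfPalindromes_mul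
    (isPalindrome_inl_mulSingle_of_one σ hq)

end F2wrS3

/-- Lemma 5: every element of the base subgroup `F₂⁶ = ∏_{σ ∈ S₃} F₂` of `F₂ ≀ S₃`
is a product of at most `18` palindromes with respect to `S = {x, y, s₁, s₂, c}`. -/
theorem base_prod_of_18_palindromes (f : S3 → FreeGroup (Fin 2)) :
    ∃ L : List F2wrS3, L.length ≤ 18 ∧ (∀ p ∈ L, IsPalindrome genSet p) ∧
      L.prod = SemidirectProduct.inl f := by
  have h12 := IsProdOfPalindromes.list_prod (X := genSet) (n := 2)
    (l := (Finset.univ.toList.map fun σ => Pi.mulSingle σ (f σ)).map SemidirectProduct.inl)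
    (by simpa using fun σ => F2wrS3.isProdOfPalindromes_inl_mulSingle σ (f σ))
  rw [← map_list_prod, Finset.prod_map_mulSingle_univ_toList] at h12
  exact h12.mono (by simp [Fintype.card_perm, Nat.factorial])
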